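/- Let X be an infinite-dimensional Banach space and let W ⊂ X be a set with non-empty norm interior. Then W cannot be covered by countably many (w,‖·‖)-LRC sets, i.e., W is not a countable union of sets that are weakly locally relatively norm-compact. -/

import Mathlib

open Set Topology

noncomputable section

/-- `E ⊆ X` is weakly locally relatively norm-compact: every point of `E` has a
weakly open neighbourhood `U` such that the norm closure of `E ∩ U` is norm-compact. -/
def IsWeakLRC {X : Type*} [NormedAddCommGroup X] [NormedSpace ℝ X] (E : Set X) : Prop :=
  ∀ x ∈ E, ∃ U : Set (WeakSpace ℝ X), IsOpen U ∧ toWeakSpace ℝ X x ∈ U ∧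
    IsCompact (closure (E ∩ (fun y : X => toWeakSpace ℝ X y) ⁻¹' U))

/-!
By Baire's theorem it suffices to show that an (w,‖·‖)-LRC set `E` in an infinite-dimensional
space is nowhere dense. If `closure E` contained a ball around a point `x ∈ E`, then the weak
neighbourhood of `x` given by the LRC property contains `x + N` for the common kernel `N` of
finitely many functionals, so a small ball of `N` would be relatively compact. By Riesz's theorem
`N` is finite-dimensional, and `X/N` is finite-dimensional as well, contradiction.
-/

theorem Module.Finite.of_finite_ker {R M N : Type*} [Ring R] [AddCommGroup M] [Module R M]
    [AddCommGroup N] [Module R N] [IsNoetherian R N] (f : M →ₗ[R] N)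
    [Module.Finite R (LinearMap.ker f)] : Module.Finite R M :=
  ⟨Submodule.fg_of_fg_map_of_fg_inf_ker f (IsNoetherian.noetherian _)
    (by rw [top_inf_eq]; exact Module.Finite.iff_fg.1 ‹_›)⟩

theorem Submodule.finiteDimensional_of_inter_ball_subset_isCompact {𝕜 E : Type*}
    [NontriviallyNormedField 𝕜] [CompleteSpace 𝕜] [NormedAddCommGroup E] [NormedSpace 𝕜 E]
    {N : Submodule 𝕜 E} (hN : IsClosed (N : Set E)) {K : Set E} (hK : IsCompact K) {r : ℝ}
    (hr : 0 < r) (hNK : (N : Set E) ∩ Metric.ball 0 r ⊆ K) : FiniteDimensional 𝕜 N := by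
  refine .of_isCompact_closedBall₀ 𝕜 (half_pos hr) <|
    (hN.isClosedEmbedding_subtypeVal.isCompact_preimage hK).of_isClosed_subset
      Metric.isClosed_closedBall fun y hy => hNK ⟨y.2, ?_⟩
  rw [mem_closedBall_zero_iff] at hy
  exact mem_ball_zero_iff.2 (hy.trans_lt (half_lt_self hr))

theorem exists_finset_subset_of_mem_nhds_weakSpace {𝕜 E : Type*} [CommSemiring 𝕜]
    [TopologicalSpace 𝕜] [ContinuousAdd 𝕜] [ContinuousConstSMul 𝕜 𝕜] [AddCommMonoid E]
    [Module 𝕜 E] [TopologicalSpace E] {x : E} {U : Set (WeakSpace 𝕜 E)}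
    (hU : U ∈ 𝓝 (toWeakSpace 𝕜 E x)) :
    ∃ s : Finset (StrongDual 𝕜 E),
      {y : E | ∀ f ∈ s, f y = f x} ⊆ toWeakSpace 𝕜 E ⁻¹' U := by
  have hind : IsInducing fun (z : WeakSpace 𝕜 E) (f : StrongDual 𝕜 E) => f z := ⟨rfl⟩
  rw [hind.nhds_eq_comap, nhds_pi] at hU
  obtain ⟨V, hV, hVU⟩ := Filter.mem_comap.1 hU
  obtain ⟨I, hI, t, ht, hIt⟩ := Filter.mem_pi.1 hV
  refine ⟨hI.toFinset, fun y hy => hVU (hIt fun f hf => ?_)⟩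
  have hfy : f y = f x := hy f (hI.mem_toFinset.2 hf)
  change f y ∈ t f
  exact hfy ▸ mem_of_mem_nhds (ht f)

theorem IsWeakLRC.isNowhereDense {X : Type*} [NormedAddCommGroup X] [NormedSpace ℝ X]
    {E : Set X} (hE : IsWeakLRC E) (hX : ¬FiniteDimensional ℝ X) : IsNowhereDense E := by
  rw [IsNowhereDense, ← not_nonempty_iff_eq_empty]
  rintro ⟨z, hz⟩
  obtain ⟨x, hx, hxE⟩ := mem_closure_iff.1 (interior_subset hz) _ isOpen_interior hz
  obtain ⟨r, hr, hball⟩ := Metric.isOpen_iff.1 isOpen_interior x hx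
  obtain ⟨U, hU, hxU, hK⟩ := hE x hxE
  obtain ⟨s, hs⟩ := exists_finset_subset_of_mem_nhds_weakSpace (hU.mem_nhds hxU)
  let L : X →L[ℝ] (s → ℝ) := ContinuousLinearMap.pi fun f => f.1
  have hkerK : (L.ker : Set X) ∩ Metric.ball 0 r ⊆
      (x + ·) ⁻¹' closure (E ∩ (fun y : X => toWeakSpace ℝ X y) ⁻¹' U) := by
    rintro y ⟨hyL, hyr⟩
    have hyE : x + y ∈ closure E := interior_subset (hball (by simpa using hyr))
    have hyU : x + y ∈ toWeakSpace ℝ X ⁻¹' U := hs fun f hf => by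
      simpa [L] using congrFun hyL ⟨f, hf⟩
    have hV : IsOpen ((fun y : X => toWeakSpace ℝ X y) ⁻¹' U) :=
      hU.preimage (toWeakSpaceCLM ℝ X).continuous
    rw [mem_preimage, inter_comm]
    exact hV.inter_closure ⟨hyU, hyE⟩
  have : FiniteDimensional ℝ L.ker := Submodule.finiteDimensional_of_inter_ball_subset_isCompact
    L.isClosed_ker ((Homeomorph.addLeft x).isCompact_preimage.2 hK) hr hkerK
  exact hX (.of_finite_ker (L : X →ₗ[ℝ] (s → ℝ)))

theorem stmt10 {X : Type*} [NormedAddCommGroup X] [NormedSpace ℝ X] [CompleteSpace X]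
    (hinf : ¬FiniteDimensional ℝ X)
    (W : Set X) (hW : (interior W).Nonempty)
    (E : ℕ → Set X) (hE : ∀ n, IsWeakLRC (E n)) :
    ¬W ⊆ ⋃ n, E n := fun hWE =>
  not_isMeagre_of_isOpen isOpen_interior hW <|
    (isMeagre_iUnion fun n => ((hE n).isNowhereDense hinf).isMeagre).mono
      (interior_subset.trans hWE)

end
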